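/- Let a, b ∈ ℕ be odd and let T_{a,b} : ℕ → ℕ be the map T_{a,b}(x) = x/2 if x is even and T_{a,b}(x) = (a·x + b)/2 if x is odd. For all k, m ∈ ℕ and all i ∈ ℕ with i < 2^k, we have T_{a,b}^k(2^k·m + i) = a^{p_k(i)}·m + T_{a,b}^k(i), where p_k(i) is the number of indices r with 0 ≤ r < k such that T_{a,b}^r(i) is odd. -/

import Mathlib

/-- The shortcut map of the `a*n + b` problem:
`Tab a b x = x / 2` if `x` is even, `(a * x + b) / 2` if `x` is odd. -/
def Tab (a b : ℕ) : ℕ → ℕ := fun x => if x % 2 = 0 then x / 2 else (a * x + b) / 2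

/-- `p a b k i` is the number of indices `r < k` such that `(Tab a b)^[r] i` is odd. -/
def p (a b k i : ℕ) : ℕ := ((Finset.range k).filter (fun r => Odd ((Tab a b)^[r] i))).card

/-! Adding an even number `2 * n` to `x` does not change its parity, so one step of `Tab a b`
maps `2 * n + x` to `a ^ [x odd] * n + Tab a b x`. Iterating `k` times, starting from
`2 ^ k * m + i`, each step halves the power of two in front of `m` and multiplies `m` by `a`
exactly when the current iterate of `i` is odd. -/

lemma Tab_two_mul_add (a b n x : ℕ) :
    Tab a b (2 * n + x) = a ^ (if Odd x then 1 else 0) * n + Tab a b x := by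
  have hpar : (2 * n + x) % 2 = x % 2 := by omega
  rcases Nat.even_or_odd x with hx | hx
  · simp only [Tab, hpar, Nat.even_iff.mp hx, Nat.not_odd_iff_even.mpr hx, if_true, if_false,
      pow_zero, one_mul]
    omega
  · simp only [Tab, hpar, Nat.odd_iff.mp hx, hx, if_true, pow_one, one_ne_zero, if_false]
    rw [show a * (2 * n + x) + b = a * x + b + 2 * (a * n) by ring,
      Nat.add_mul_div_left _ _ two_pos, add_comm]

lemma p_succ (a b k x : ℕ) :
    p a b (k + 1) x = (if Odd x then 1 else 0) + p a b k (Tab a b x) := by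
  simp only [p, Finset.card_filter, Finset.sum_range_succ', Function.iterate_succ_apply,
    Function.iterate_zero_apply]
  exact add_comm _ _

theorem general_class_formula_general (a b : ℕ) (k m i : ℕ) :
    (Tab a b)^[k] (2 ^ k * m + i) = a ^ (p a b k i) * m + (Tab a b)^[k] i := by
  induction k generalizing m i with
  | zero => simp [p]
  | succ k ih =>
    calc (Tab a b)^[k + 1] (2 ^ (k + 1) * m + i)
        = (Tab a b)^[k] (2 ^ k * (a ^ (if Odd i then 1 else 0) * m) + Tab a b i) := by
          rw [Function.iterate_succ_apply, pow_succ, mul_comm _ 2, mul_assoc, Tab_two_mul_add,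
            mul_left_comm]
      _ = a ^ p a b (k + 1) i * m + (Tab a b)^[k + 1] i := by
          rw [ih, p_succ, pow_add, Function.iterate_succ_apply]
          ring

theorem general_class_formula (a b : ℕ) (ha : Odd a) (hb : Odd b) (k m i : ℕ)
    (hi : i < 2 ^ k) :
    (Tab a b)^[k] (2 ^ k * m + i) = a ^ (p a b k i) * m + (Tab a b)^[k] i :=
  general_class_formula_general a b k m i
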